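/- arXiv:1406.5468 — 5 statements merged into one kernel-verified Lean document; each statement's English description precedes it below -/
import Mathlib

section
/- Fix N ≥ 1. Define θ_0 = 1, θ_{i+1} = (1 + sqrt(1 + 4 θ_i^2))/2 for 0 ≤ i ≤ N-2, and θ_N = (1 + sqrt(1 + 8 θ_{N-1}^2))/2. Then 1/θ_N^2 ≤ 2/((N+1)(N+1+sqrt(2))). -/
/-! Since `t_{i+1} ≥ t_i + 1/2`, the standard sequence satisfies `t_{N-1} ≥ (N + 1)/2`, and the
modified last step gives `θ_N ≥ (1 + 2√2 t_{N-1})/2 ≥ (1 + √2 (N + 1))/2`. Squaring,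
`2 θ_N² ≥ (N + 1)² + √2 (N + 1) + 1/2`, which dominates `(N + 1)(N + 1 + √2)`. -/

noncomputable def tseq : ℕ → ℝ
  | 0 => 1
  | i + 1 => (1 + Real.sqrt (1 + 4 * (tseq i) ^ 2)) / 2

noncomputable def θseq (N i : ℕ) : ℝ :=
  if i < N then tseq i else (1 + Real.sqrt (1 + 8 * (tseq (N - 1)) ^ 2)) / 2

lemma sqrt_mul_le_sqrt_one_add_mul_sq {a b : ℝ} (ha : 0 ≤ a) (hb : 0 ≤ b) :
    Real.sqrt a * b ≤ Real.sqrt (1 + a * b ^ 2) := by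
  calc Real.sqrt a * b = Real.sqrt (a * b ^ 2) := by
        rw [Real.sqrt_mul ha, Real.sqrt_sq hb]
    _ ≤ Real.sqrt (1 + a * b ^ 2) := Real.sqrt_le_sqrt (by linarith)

lemma add_two_div_two_le_tseq (i : ℕ) : ((i : ℝ) + 2) / 2 ≤ tseq i := by
  induction i with
  | zero => norm_num [tseq]
  | succ i ih =>
    have hstep : 2 * tseq i ≤ Real.sqrt (1 + 4 * tseq i ^ 2) := by
      have := sqrt_mul_le_sqrt_one_add_mul_sq (a := 4) (by norm_num)
        (le_trans (by positivity) ih)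
      rwa [show Real.sqrt 4 = 2 by
        rw [show (4 : ℝ) = 2 ^ 2 by norm_num, Real.sqrt_sq (by norm_num)]] at this
    rw [tseq]
    push_cast
    linarith

lemma add_one_div_two_le_tseq_pred (N : ℕ) : ((N : ℝ) + 1) / 2 ≤ tseq (N - 1) := by
  cases N with
  | zero => norm_num [tseq]
  | succ n =>
    have := add_two_div_two_le_tseq n
    rw [Nat.add_sub_cancel]
    push_cast
    linarith

lemma θseq_self_ge (N : ℕ) : (1 + Real.sqrt 2 * ((N : ℝ) + 1)) / 2 ≤ θseq N N := by
  have ht := add_one_div_two_le_tseq_pred N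
  have hsqrt8 : Real.sqrt 8 = 2 * Real.sqrt 2 := by
    rw [show (8 : ℝ) = 2 ^ 2 * 2 by norm_num, Real.sqrt_mul (by norm_num),
      Real.sqrt_sq (by norm_num)]
  have hstep := sqrt_mul_le_sqrt_one_add_mul_sq (a := 8) (by norm_num)
    (le_trans (by positivity) ht)
  rw [hsqrt8] at hstep
  have : Real.sqrt 2 * ((N : ℝ) + 1) ≤ 2 * Real.sqrt 2 * tseq (N - 1) := by
    nlinarith [Real.sqrt_nonneg 2]
  rw [θseq, if_neg (lt_irrefl N)]
  linarith

theorem stmt_5_general (N : ℕ) :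
    1 / (θseq N N) ^ 2 ≤ 2 / (((N : ℝ) + 1) * ((N : ℝ) + 1 + Real.sqrt 2)) := by
  have hθ := θseq_self_ge N
  have hs : Real.sqrt 2 ^ 2 = 2 := Real.sq_sqrt (by norm_num)
  have hlow : 0 < (1 + Real.sqrt 2 * ((N : ℝ) + 1)) / 2 := by positivity
  have hsq : ((1 + Real.sqrt 2 * ((N : ℝ) + 1)) / 2) ^ 2 ≤ θseq N N ^ 2 :=
    pow_le_pow_left₀ hlow.le hθ 2
  rw [div_le_div_iff₀ (by nlinarith) (by positivity)]
  nlinarith [Real.sqrt_nonneg 2]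

theorem stmt_5 (N : ℕ) (hN : 1 ≤ N) :
    1 / (θseq N N) ^ 2 ≤ 2 / (((N : ℝ) + 1) * ((N : ℝ) + 1 + Real.sqrt 2)) :=
  stmt_5_general N
end

section
/- Let t_0 = 1 and t_{i+1} = (1 + sqrt(1 + 4 t_i^2))/2. Define coefficients h by the FGM1 rule: h_{i+1,k} = ((t_i - 1)/t_{i+1})·h_{i,k} for k ≤ i-2, h_{i+1,i-1} = ((t_i - 1)/t_{i+1})·(h_{i,i-1} - 1), h_{i+1,i} = 1 + (t_i - 1)/t_{i+1}; and define coefficients h' by the FGM2 rule: h'_{i+1,k} = (1/t_{i+1})·(t_k - sum_{j=k+1}^{i} h'_{j,k}) for k ≤ i-1, h'_{i+1,i} = 1 + (t_i - 1)/t_{i+1}. Then h_{i,k} = h'_{i,k} for all 0 ≤ k < i. -/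
open Finset

structure IsFGM1Coeffs (t : ℕ → ℝ) (h : ℕ → ℕ → ℝ) : Prop where
  succ_of_add_two_le : ∀ i k, k + 2 ≤ i → h (i + 1) k = ((t i - 1) / t (i + 1)) * h i k
  add_two_self : ∀ i, h (i + 2) i = ((t (i + 1) - 1) / t (i + 2)) * (h (i + 1) i - 1)
  succ_self : ∀ i, h (i + 1) i = 1 + (t i - 1) / t (i + 1)

structure IsFGM2Coeffs (t : ℕ → ℝ) (h : ℕ → ℕ → ℝ) : Prop where
  succ_of_lt : ∀ i k, k < i →
    h (i + 1) k = (1 / t (i + 1)) * (t k - ∑ j ∈ Ico (k + 1) (i + 1), h j k)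
  succ_self : ∀ i, h (i + 1) i = 1 + (t i - 1) / t (i + 1)

namespace IsFGM1Coeffs

variable {t : ℕ → ℝ} {h : ℕ → ℕ → ℝ}

theorem sub_sum_eq (hF : IsFGM1Coeffs t h) (ht : ∀ i, t (i + 1) ≠ 0) {k i : ℕ} (hki : k < i) :
    t k - ∑ j ∈ Ico (k + 1) (i + 1), h j k = t (i + 1) * h (i + 1) k := by
  induction i, hki using Nat.le_induction with
  | base =>
    have h₁ := ht k
    have h₂ := ht (k + 1)
    rw [Nat.Ico_succ_singleton, sum_singleton, hF.add_two_self, hF.succ_self]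
    field_simp
    ring
  | succ i hki ih =>
    have h₁ := ht (i + 1)
    rw [sum_Ico_succ_top (by omega), ← sub_sub, ih, hF.succ_of_add_two_le (i + 1) k (by omega)]
    field_simp

theorem isFGM2Coeffs (hF : IsFGM1Coeffs t h) (ht : ∀ i, t (i + 1) ≠ 0) : IsFGM2Coeffs t h where
  succ_of_lt i k hki := by
    rw [hF.sub_sum_eq ht hki, one_div, inv_mul_cancel_left₀ (ht i)]
  succ_self := hF.succ_self

end IsFGM1Coeffs

theorem IsFGM2Coeffs.eq {t : ℕ → ℝ} {h h' : ℕ → ℕ → ℝ} (hF : IsFGM2Coeffs t h)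
    (hF' : IsFGM2Coeffs t h') {i k : ℕ} (hki : k < i) : h i k = h' i k := by
  induction i using Nat.strong_induction_on generalizing k with
  | _ i ih =>
    obtain ⟨i, rfl⟩ : ∃ m, i = m + 1 := ⟨i - 1, by omega⟩
    rcases Nat.lt_succ_iff_lt_or_eq.mp hki with hki | rfl
    · rw [hF.succ_of_lt i k hki, hF'.succ_of_lt i k hki]
      congr 2
      refine sum_congr rfl fun j hj => ih j ?_ ?_ <;> grind
    · rw [hF.succ_self, hF'.succ_self]

theorem tseq_pos : ∀ i, 0 < tseq i
  | 0 => by norm_num [tseq]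
  | i + 1 => by
    rw [tseq]
    positivity

/-- The coefficients `h` of FGM1 and `h'` of FGM2 coincide for all `0 ≤ k < i`. -/
theorem stmt_6 (h h' : ℕ → ℕ → ℝ)
    -- FGM1 rule
    (hF1a : ∀ i k, k + 2 ≤ i →
      h (i + 1) k = ((tseq i - 1) / tseq (i + 1)) * h i k)
    (hF1b : ∀ i, h (i + 2) i = ((tseq (i + 1) - 1) / tseq (i + 2)) * (h (i + 1) i - 1))
    (hF1c : ∀ i, h (i + 1) i = 1 + (tseq i - 1) / tseq (i + 1))
    -- FGM2 rule
    (hF2a : ∀ i k, k < i →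
      h' (i + 1) k = (1 / tseq (i + 1)) * (tseq k - ∑ j ∈ Finset.Ico (k + 1) (i + 1), h' j k))
    (hF2b : ∀ i, h' (i + 1) i = 1 + (tseq i - 1) / tseq (i + 1)) :
    ∀ i k, k < i → h i k = h' i k := by
  intro i k hki
  have hFGM1 : IsFGM1Coeffs tseq h := ⟨hF1a, hF1b, hF1c⟩
  exact (hFGM1.isFGM2Coeffs fun i => (tseq_pos (i + 1)).ne').eq ⟨hF2a, hF2b⟩ hki
end

section
/- Fix N ≥ 1 and let θ_0, ..., θ_N be the OGM step-size sequence. Define coefficients h by: h_{i+1,k} = (1/θ_{i+1})·(2θ_k - sum_{j=k+1}^{i} h_{j,k}) for k = 0,...,i-1, and h_{i+1,i} = 1 + (2θ_i - 1)/θ_{i+1}. Then these coefficients satisfy the recursion h_{i+1,k} = ((θ_i - 1)/θ_{i+1})·h_{i,k} for k ≤ i-2, h_{i+1,i-1} = ((θ_i - 1)/θ_{i+1})·(h_{i,i-1} - 1), and h_{i+1,i} = 1 + (2θ_i - 1)/θ_{i+1}. -/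
lemma one_le_tseq (i : ℕ) : 1 ≤ tseq i := by
  cases i with
  | zero => simp [tseq]
  | succ n =>
    have : 1 ≤ Real.sqrt (1 + 4 * tseq n ^ 2) :=
      Real.one_le_sqrt.mpr (by nlinarith [sq_nonneg (tseq n)])
    rw [tseq]
    linarith

lemma θseq_pos (N i : ℕ) : 0 < θseq N i := by
  unfold θseq
  split
  · linarith [one_le_tseq i]
  · positivity

section OGMCoefficients

variable {θ : ℕ → ℝ} {h : ℕ → ℕ → ℝ} {N : ℕ}

lemma ogm_coeff_succ_eq_mul (hθ : ∀ i, θ i ≠ 0)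
    (hO2a : ∀ i k, k < i → i + 1 ≤ N →
      h (i + 1) k = (1 / θ (i + 1)) * (2 * θ k - ∑ j ∈ Finset.Ico (k + 1) (i + 1), h j k))
    {i k : ℕ} (hki : k + 2 ≤ i) (hiN : i + 1 ≤ N) :
    h (i + 1) k = ((θ i - 1) / θ (i + 1)) * h i k := by
  obtain ⟨m, rfl⟩ : ∃ m, i = m + 1 := ⟨i - 1, by omega⟩
  have scaled : ∀ j, k < j → j + 1 ≤ N →
      θ (j + 1) * h (j + 1) k = 2 * θ k - ∑ l ∈ Finset.Ico (k + 1) (j + 1), h l k := by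
    intro j hkj hjN
    rw [hO2a j k hkj hjN]
    field_simp [hθ]
  have hnext := scaled (m + 1) (by omega) hiN
  rw [Finset.sum_Ico_succ_top (by omega : k + 1 ≤ m + 1)] at hnext
  have hprev := scaled m (by omega) (by omega)
  rw [div_mul_eq_mul_div, eq_div_iff (hθ _)]
  linarith

lemma ogm_coeff_succ_sub_one (hθ : ∀ i, θ i ≠ 0)
    (hO2a : ∀ i k, k < i → i + 1 ≤ N →
      h (i + 1) k = (1 / θ (i + 1)) * (2 * θ k - ∑ j ∈ Finset.Ico (k + 1) (i + 1), h j k))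
    (hO2b : ∀ i, i + 1 ≤ N → h (i + 1) i = 1 + (2 * θ i - 1) / θ (i + 1))
    {i : ℕ} (hiN : i + 2 ≤ N) :
    h (i + 2) i = ((θ (i + 1) - 1) / θ (i + 2)) * (h (i + 1) i - 1) := by
  have hdiag : θ (i + 1) * (h (i + 1) i - 1) = 2 * θ i - 1 := by
    rw [hO2b i (by omega)]
    field_simp [hθ]
    ring
  have hnext : θ (i + 2) * h (i + 2) i = 2 * θ i - h (i + 1) i := by
    rw [hO2a (i + 1) i (by omega) hiN, Finset.sum_Ico_succ_top le_rfl, Finset.Ico_self,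
      Finset.sum_empty, zero_add]
    field_simp [hθ]
  rw [div_mul_eq_mul_div, eq_div_iff (hθ _)]
  linarith

end OGMCoefficients

theorem stmt_7_general (N : ℕ) (h : ℕ → ℕ → ℝ)
    (hO2a : ∀ i k, k < i → i + 1 ≤ N →
      h (i + 1) k = (1 / θseq N (i + 1)) *
        (2 * θseq N k - ∑ j ∈ Finset.Ico (k + 1) (i + 1), h j k))
    (hO2b : ∀ i, i + 1 ≤ N → h (i + 1) i = 1 + (2 * θseq N i - 1) / θseq N (i + 1)) :
    (∀ i k, k + 2 ≤ i → i + 1 ≤ N →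
      h (i + 1) k = ((θseq N i - 1) / θseq N (i + 1)) * h i k) ∧
    (∀ i, i + 2 ≤ N →
      h (i + 2) i = ((θseq N (i + 1) - 1) / θseq N (i + 2)) * (h (i + 1) i - 1)) ∧
    (∀ i, i + 1 ≤ N → h (i + 1) i = 1 + (2 * θseq N i - 1) / θseq N (i + 1)) := by
  have hθ : ∀ i, θseq N i ≠ 0 := fun i => (θseq_pos N i).ne'
  exact ⟨fun _ _ hki hiN => ogm_coeff_succ_eq_mul hθ hO2a hki hiN,
    fun _ hiN => ogm_coeff_succ_sub_one hθ hO2a hO2b hiN, hO2b⟩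

/-- The OGM coefficients defined by the OGM2-type rule satisfy the OGM1-type recursion. -/
theorem stmt_7 (N : ℕ) (hN : 1 ≤ N) (h : ℕ → ℕ → ℝ)
    (hO2a : ∀ i k, k < i → i + 1 ≤ N →
      h (i + 1) k = (1 / θseq N (i + 1)) *
        (2 * θseq N k - ∑ j ∈ Finset.Ico (k + 1) (i + 1), h j k))
    (hO2b : ∀ i, i + 1 ≤ N → h (i + 1) i = 1 + (2 * θseq N i - 1) / θseq N (i + 1)) :
    (∀ i k, k + 2 ≤ i → i + 1 ≤ N →
      h (i + 1) k = ((θseq N i - 1) / θseq N (i + 1)) * h i k) ∧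
    (∀ i, i + 2 ≤ N →
      h (i + 2) i = ((θseq N (i + 1) - 1) / θseq N (i + 2)) * (h (i + 1) i - 1)) ∧
    (∀ i, i + 1 ≤ N → h (i + 1) i = 1 + (2 * θseq N i - 1) / θseq N (i + 1)) :=
  stmt_7_general N h hO2a hO2b
end

section
/- Fix N ≥ 1 and let θ_0,...,θ_N be the OGM sequence. Define λ_i = 2θ_{i-1}^2/θ_N^2 for i = 1,...,N and τ_i = 2θ_i/θ_N^2 for i = 0,...,N-1 and τ_N = 1/θ_N. Then (λ, τ) satisfies: τ_0 = λ_1, λ_N + τ_N = 1, and λ_i - λ_{i+1} + τ_i = 0 for i = 1,...,N-1. -/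
/-
Every θ is the positive root of a quadratic `x² - x = c`, which gives
`θ_i² - θ_i = θ_{i-1}²` for `0 < i < N` and `θ_N² - θ_N = 2 θ_{N-1}²`. After multiplying by
`2 / θ_N²`, the first is the recursion `λ_i - λ_{i+1} + τ_i = 0` and the second is
`λ_N + τ_N = 1`. Since `θ_0 = 1`, also `τ_0 = λ_1`.
-/

lemma one_add_sqrt_div_two_sq_sub_self {c : ℝ} (hc : 0 ≤ 1 + 4 * c) :
    ((1 + √(1 + 4 * c)) / 2) ^ 2 - (1 + √(1 + 4 * c)) / 2 = c := by
  nlinarith [Real.sq_sqrt hc]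

lemma tseq_succ_sq_sub_self (i : ℕ) : tseq (i + 1) ^ 2 - tseq (i + 1) = tseq i ^ 2 :=
  one_add_sqrt_div_two_sq_sub_self (by positivity)

lemma θseq_of_lt {N i : ℕ} (h : i < N) : θseq N i = tseq i := if_pos h

lemma θseq_self_sq_sub_self (N : ℕ) : θseq N N ^ 2 - θseq N N = 2 * tseq (N - 1) ^ 2 := by
  have key := one_add_sqrt_div_two_sq_sub_self (c := 2 * tseq (N - 1) ^ 2) (by positivity)
  rw [← mul_assoc, show (4 : ℝ) * 2 = 8 by norm_num] at key
  rwa [θseq, if_neg (lt_irrefl N)]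

lemma θseq_self_pos (N : ℕ) : 0 < θseq N N := by
  rw [θseq, if_neg (lt_irrefl N)]
  positivity

/-- The OGM dual variables `(λ, τ)` lie in the dual feasible set `Λ`. -/
theorem stmt_11 (N : ℕ) (hN : 1 ≤ N)
    (lam : ℕ → ℝ) (hlam : ∀ i, lam i = 2 * (θseq N (i - 1)) ^ 2 / (θseq N N) ^ 2)
    (tau : ℕ → ℝ)
    (htau : ∀ i, tau i = if i < N then 2 * θseq N i / (θseq N N) ^ 2 else 1 / θseq N N) :
    tau 0 = lam 1 ∧ lam N + tau N = 1 ∧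
    ∀ i, 1 ≤ i → i < N → lam i - lam (i + 1) + tau i = 0 := by
  have hθN := (θseq_self_pos N).ne'
  refine ⟨?_, ?_, fun i hi hiN => ?_⟩
  · rw [htau, hlam, if_pos (show 0 < N from hN), Nat.sub_self, θseq_of_lt hN, tseq]
    ring
  · have hrec := θseq_self_sq_sub_self N
    rw [hlam, htau, if_neg (lt_irrefl N), θseq_of_lt (by omega : N - 1 < N)]
    field_simp
    linarith
  · have hrec := tseq_succ_sq_sub_self (i - 1)
    rw [Nat.sub_add_cancel hi] at hrec
    rw [hlam, hlam, htau, if_pos hiN, Nat.add_sub_cancel, θseq_of_lt hiN,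
      θseq_of_lt (by omega : i - 1 < N)]
    field_simp
    linarith
end

section
/- Fix N ≥ 1 and let θ_{N-1} satisfy θ_{N-1} ≥ (N+1)/2, and θ_N = (1 + sqrt(1 + 8θ_{N-1}^2))/2. Then θ_N ≥ (N+1)/sqrt(2) + 1/2, and hence 1/(2θ_N^2) ≤ 1/((N+1)(N+1+sqrt(2))). -/
/-!
Since `√(1 + 8θ²) ≥ √8 · θ`, the recursion `θ ↦ (1 + √(1 + 8θ²))/2` multiplies a lower bound
on `θ` by at least `√2` (up to the additive `1/2`); squaring the resulting bound on `θ_N` gives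
`2θ_N² ≥ (N+1)² + √2 (N+1) + 1/2`.
-/

open Real

lemma div_sqrt_two (a : ℝ) : a / √2 = √2 * a / 2 := by
  have h : √2 ^ 2 = 2 := sq_sqrt zero_le_two
  rw [div_eq_div_iff (by positivity) two_ne_zero]
  linear_combination (-a) * h

lemma sqrt_two_mul_two_mul_le_sqrt {t : ℝ} (ht : 0 ≤ t) : √2 * (2 * t) ≤ √(1 + 8 * t ^ 2) := by
  rw [le_sqrt (by positivity) (by positivity), mul_pow, sq_sqrt zero_le_two]
  linarith

lemma le_ogm_step {a θ : ℝ} (ha : 0 ≤ a) (hθ : a / 2 ≤ θ) :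
    a / √2 + 1 / 2 ≤ (1 + √(1 + 8 * θ ^ 2)) / 2 := by
  have hstep := sqrt_two_mul_two_mul_le_sqrt (by linarith : 0 ≤ θ)
  have hmono : √2 * a ≤ √2 * (2 * θ) := by gcongr; linarith
  rw [div_sqrt_two]
  linarith

lemma mul_add_sqrt_two_le_two_mul_sq {a θ : ℝ} (ha : 0 ≤ a) (hθ : a / √2 + 1 / 2 ≤ θ) :
    a * (a + √2) ≤ 2 * θ ^ 2 := by
  rw [div_sqrt_two] at hθ
  have hs : √2 ^ 2 = 2 := sq_sqrt zero_le_two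
  have hlow : 0 ≤ √2 * a / 2 + 1 / 2 := by positivity
  nlinarith [pow_le_pow_left₀ hlow hθ 2]

theorem stmt_19_general (N : ℕ) (θNm1 θN : ℝ)
    (h1 : θNm1 ≥ ((N : ℝ) + 1) / 2)
    (h2 : θN = (1 + Real.sqrt (1 + 8 * θNm1 ^ 2)) / 2) :
    θN ≥ ((N : ℝ) + 1) / Real.sqrt 2 + 1 / 2 ∧
    1 / (2 * θN ^ 2) ≤ 1 / (((N : ℝ) + 1) * ((N : ℝ) + 1 + Real.sqrt 2)) := by
  have hN : (0 : ℝ) ≤ (N : ℝ) + 1 := by positivity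
  have hθN : ((N : ℝ) + 1) / √2 + 1 / 2 ≤ θN := h2 ▸ le_ogm_step hN h1
  refine ⟨hθN, one_div_le_one_div_of_le (by positivity) ?_⟩
  exact mul_add_sqrt_two_le_two_mul_sq hN hθN

/-- Quantitative bound on the final OGM parameter `θ_N`. -/
theorem stmt_19 (N : ℕ) (hN : 1 ≤ N) (θNm1 θN : ℝ)
    (h1 : θNm1 ≥ ((N : ℝ) + 1) / 2)
    (h2 : θN = (1 + Real.sqrt (1 + 8 * θNm1 ^ 2)) / 2) :
    θN ≥ ((N : ℝ) + 1) / Real.sqrt 2 + 1 / 2 ∧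
    1 / (2 * θN ^ 2) ≤ 1 / (((N : ℝ) + 1) * ((N : ℝ) + 1 + Real.sqrt 2)) :=
  stmt_19_general N θNm1 θN h1 h2
end
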